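/- arXiv:0801.2626 — 3 statements merged into one kernel-verified Lean document; each statement's English description precedes it below -/
import Mathlib

section
/- Let e ∈ [0,1] and let η be a real-valued random variable with mean 0 and variance β². For velocities v, w ∈ ℝ³ and σ ∈ S², define the post-collisional velocities v' = (v+w)/2 + ((1-ẽ)/4)(v-w) + ((1+ẽ)/4)|v-w|σ and w' = (v+w)/2 - ((1-ẽ)/4)(v-w) - ((1+ẽ)/4)|v-w|σ with ẽ = e + η. Then the expected post-collisional energy satisfies E[|v'|² + |w'|²] = |v|² + |w|² - ((1-e²-β²)/4)(|v-w|² - |v-w|(v-w)·σ). -/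
open MeasureTheory

/-!
For a fixed restitution coefficient `r`, the post-collisional velocities are `m ± z` with
`m = (v + w) / 2` and `z = ((1 - r) / 4) (v - w) + ((1 + r) / 4) |v - w| σ`, so by the
parallelogram law the energy after the collision is `|v|² + |w|² - ((1 - r²) / 4) D` with
`D = |v - w|² - |v - w| (v - w) · σ`. This is affine in `r²`, and for `r = e + η` the mean of
`r²` is `e² + β²`.
-/

section Collision

variable {E : Type*} [NormedAddCommGroup E] [InnerProductSpace ℝ E]

lemma norm_sq_smul_add_smul_unit (a b : ℝ) (u σ : E) (hσ : ‖σ‖ = 1) :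
    ‖a • u + b • σ‖ ^ 2 = a ^ 2 * ‖u‖ ^ 2 + 2 * (a * b) * inner ℝ u σ + b ^ 2 := by
  rw [norm_add_sq_real, norm_smul, norm_smul, real_inner_smul_left, real_inner_smul_right, hσ]
  simp only [Real.norm_eq_abs, mul_pow, sq_abs]
  ring

theorem norm_sq_add_norm_sq_postcollisional (v w σ : E) (hσ : ‖σ‖ = 1) (r : ℝ) :
    ‖(1 / 2 : ℝ) • (v + w) + ((1 - r) / 4) • (v - w) + ((1 + r) / 4 * ‖v - w‖) • σ‖ ^ 2
      + ‖(1 / 2 : ℝ) • (v + w) - ((1 - r) / 4) • (v - w) - ((1 + r) / 4 * ‖v - w‖) • σ‖ ^ 2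
      = ‖v‖ ^ 2 + ‖w‖ ^ 2
        - ((1 - r ^ 2) / 4) * (‖v - w‖ ^ 2 - ‖v - w‖ * inner ℝ (v - w) σ) := by
  rw [add_assoc, sub_sub, parallelogram_law_with_norm ℝ,
    norm_sq_smul_add_smul_unit _ _ _ _ hσ, norm_smul]
  have hvw := parallelogram_law_with_norm ℝ v w
  simp only [Real.norm_eq_abs, mul_pow, sq_abs] at hvw ⊢
  linear_combination hvw / 2

end Collision

section Expectation

variable {Ω : Type*} [MeasurableSpace Ω] {μ : Measure Ω} {η : Ω → ℝ}

lemma integrable_const_add_sq [IsFiniteMeasure μ] (hint : Integrable η μ)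
    (hint2 : Integrable (fun ω => η ω ^ 2) μ) (c : ℝ) : Integrable (fun ω => (c + η ω) ^ 2) μ := by
  simp only [add_sq]
  exact ((integrable_const _).add (hint.const_mul _)).add hint2

lemma integral_const_add_sq_of_integral_eq_zero [IsProbabilityMeasure μ] (hint : Integrable η μ)
    (hint2 : Integrable (fun ω => η ω ^ 2) μ) (hmean : ∫ ω, η ω ∂μ = 0) (c : ℝ) :
    ∫ ω, (c + η ω) ^ 2 ∂μ = c ^ 2 + ∫ ω, η ω ^ 2 ∂μ := by
  simp only [add_sq]
  rw [integral_add (f := fun ω => c ^ 2 + 2 * c * η ω)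
    ((integrable_const _).add (hint.const_mul _)) hint2,
    integral_add (integrable_const _) (hint.const_mul _), integral_const_mul, hmean]
  simp

end Expectation

theorem expected_postcollisional_energy_general
    {Ω : Type*} [MeasurableSpace Ω] (μ : Measure Ω) [IsProbabilityMeasure μ]
    (e β : ℝ)
    (η : Ω → ℝ)
    (hint : Integrable η μ) (hint2 : Integrable (fun ω => (η ω) ^ 2) μ)
    (hmean : ∫ ω, η ω ∂μ = 0) (hvar : ∫ ω, (η ω) ^ 2 ∂μ = β ^ 2)
    (v w σ : EuclideanSpace ℝ (Fin 3)) (hσ : ‖σ‖ = 1)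
    (v' w' : Ω → EuclideanSpace ℝ (Fin 3))
    (hv' : ∀ ω, v' ω = (1 / 2 : ℝ) • (v + w) + ((1 - (e + η ω)) / 4) • (v - w)
        + (((1 + (e + η ω)) / 4) * ‖v - w‖) • σ)
    (hw' : ∀ ω, w' ω = (1 / 2 : ℝ) • (v + w) - ((1 - (e + η ω)) / 4) • (v - w)
        - (((1 + (e + η ω)) / 4) * ‖v - w‖) • σ) :
    ∫ ω, (‖v' ω‖ ^ 2 + ‖w' ω‖ ^ 2) ∂μ
      = ‖v‖ ^ 2 + ‖w‖ ^ 2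
        - ((1 - e ^ 2 - β ^ 2) / 4)
            * (‖v - w‖ ^ 2 - ‖v - w‖ * (inner ℝ (v - w) σ : ℝ)) := by
  set K := ‖v‖ ^ 2 + ‖w‖ ^ 2
  set D := ‖v - w‖ ^ 2 - ‖v - w‖ * (inner ℝ (v - w) σ : ℝ)
  have henergy : ∀ ω, ‖v' ω‖ ^ 2 + ‖w' ω‖ ^ 2 = (K - D / 4) + D / 4 * (e + η ω) ^ 2 := by
    intro ω
    rw [hv', hw', norm_sq_add_norm_sq_postcollisional v w σ hσ]
    ring
  simp_rw [henergy]
  rw [integral_add (integrable_const _) ((integrable_const_add_sq hint hint2 e).const_mul _),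
    integral_const_mul, integral_const_add_sq_of_integral_eq_zero hint hint2 hmean, hvar]
  simp only [integral_const, probReal_univ, smul_eq_mul, one_mul]
  ring

/-- expected post-collisional energy for the random inelastic
Maxwell collision mechanism. -/
theorem expected_postcollisional_energy
    {Ω : Type*} [MeasurableSpace Ω] (μ : Measure Ω) [IsProbabilityMeasure μ]
    (e β : ℝ) (he0 : 0 ≤ e) (he1 : e ≤ 1)
    (η : Ω → ℝ) (hmeas : Measurable η)
    (hint : Integrable η μ) (hint2 : Integrable (fun ω => (η ω) ^ 2) μ)
    (hmean : ∫ ω, η ω ∂μ = 0) (hvar : ∫ ω, (η ω) ^ 2 ∂μ = β ^ 2)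
    (v w σ : EuclideanSpace ℝ (Fin 3)) (hσ : ‖σ‖ = 1)
    (v' w' : Ω → EuclideanSpace ℝ (Fin 3))
    (hv' : ∀ ω, v' ω = (1 / 2 : ℝ) • (v + w) + ((1 - (e + η ω)) / 4) • (v - w)
        + (((1 + (e + η ω)) / 4) * ‖v - w‖) • σ)
    (hw' : ∀ ω, w' ω = (1 / 2 : ℝ) • (v + w) - ((1 - (e + η ω)) / 4) • (v - w)
        - (((1 + (e + η ω)) / 4) * ‖v - w‖) • σ) :
    ∫ ω, (‖v' ω‖ ^ 2 + ‖w' ω‖ ^ 2) ∂μ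
      = ‖v‖ ^ 2 + ‖w‖ ^ 2
        - ((1 - e ^ 2 - β ^ 2) / 4)
            * (‖v - w‖ ^ 2 - ‖v - w‖ * (inner ℝ (v - w) σ : ℝ)) :=
  expected_postcollisional_energy_general μ e β η hint hint2 hmean hvar v w σ hσ v' w' hv' hw'
end

section
/- With the random collision mechanism ẽ = e + η, E[η]=0, E[η²]=β², the choice β² = 1 - e² implies E[|v'|² + |w'|²] = |v|² + |w|² for all v, w ∈ ℝ³ and all σ ∈ S² (the collision is conservative in the mean). -/
open MeasureTheory

open scoped RealInnerProductSpace

/-!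
By the parallelogram law, a collision with restitution coefficient `t` turns the energy
`‖v‖² + ‖w‖²` into `‖v‖² + ‖w‖² - (1 - t²) · r (r - ⟪v - w, σ⟫) / 4` with `r = ‖v - w‖`.
This is affine in `t²`, so its mean is conserved as soon as `E[ẽ²] = e² + β² = 1`.
-/

section Collision

variable {E : Type*} [NormedAddCommGroup E] [InnerProductSpace ℝ E]

lemma norm_smul_add_smul_sq_of_norm_eq_one (x y : ℝ) (u : E) {σ : E} (hσ : ‖σ‖ = 1) :
    ‖x • u + y • σ‖ ^ 2 = x ^ 2 * ‖u‖ ^ 2 + 2 * (x * y) * ⟪u, σ⟫ + y ^ 2 := by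
  rw [norm_add_sq_real, norm_smul, norm_smul, real_inner_smul_left, real_inner_smul_right, hσ,
    mul_pow, mul_pow, Real.norm_eq_abs, Real.norm_eq_abs, sq_abs, sq_abs]
  ring

lemma collision_energy (v w σ : E) (hσ : ‖σ‖ = 1) (t : ℝ) :
    ‖(1 / 2 : ℝ) • (v + w) + ((1 - t) / 4) • (v - w) + (((1 + t) / 4) * ‖v - w‖) • σ‖ ^ 2
      + ‖(1 / 2 : ℝ) • (v + w) - ((1 - t) / 4) • (v - w) - (((1 + t) / 4) * ‖v - w‖) • σ‖ ^ 2
      = ‖v‖ ^ 2 + ‖w‖ ^ 2 - (‖v - w‖ ^ 2 - ‖v - w‖ * ⟪v - w, σ⟫) / 4 * (1 - t ^ 2) := by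
  set b := ((1 - t) / 4) • (v - w) + (((1 + t) / 4) * ‖v - w‖) • σ
  have hb : ‖b‖ ^ 2 = ((1 - t) / 4) ^ 2 * ‖v - w‖ ^ 2
      + 2 * ((1 - t) / 4 * ((1 + t) / 4 * ‖v - w‖)) * ⟪v - w, σ⟫ + ((1 + t) / 4 * ‖v - w‖) ^ 2 :=
    norm_smul_add_smul_sq_of_norm_eq_one _ _ _ hσ
  have hsmul : ‖(1 / 2 : ℝ) • (v + w)‖ ^ 2 = ‖v + w‖ ^ 2 / 4 := by
    rw [norm_smul, mul_pow, Real.norm_eq_abs, sq_abs]; ring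
  have hpar : ‖v + w‖ ^ 2 + ‖v - w‖ ^ 2 = 2 * (‖v‖ ^ 2 + ‖w‖ ^ 2) := by
    rw [norm_add_sq_real, norm_sub_sq_real]; ring
  rw [add_assoc, sub_sub, norm_add_sq_real, norm_sub_sq_real, hb, hsmul]
  linear_combination hpar / 2

end Collision

lemma integrable_and_integral_const_add_sq {Ω : Type*} [MeasurableSpace Ω] {μ : Measure Ω}
    [IsProbabilityMeasure μ] {η : Ω → ℝ} (hint : Integrable η μ) (hint2 : Integrable (fun ω => η ω ^ 2) μ)
    (hmean : ∫ ω, η ω ∂μ = 0) (e : ℝ) :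
    Integrable (fun ω => (e + η ω) ^ 2) μ ∧ ∫ ω, (e + η ω) ^ 2 ∂μ = e ^ 2 + ∫ ω, η ω ^ 2 ∂μ := by
  have hexp : (fun ω => (e + η ω) ^ 2) = fun ω => e ^ 2 + 2 * e * η ω + η ω ^ 2 := by
    ext ω; ring
  have hlin : Integrable (fun ω => e ^ 2 + 2 * e * η ω) μ :=
    (integrable_const _).add (hint.const_mul _)
  rw [hexp]
  refine ⟨hlin.add hint2, ?_⟩
  rw [integral_add hlin hint2, integral_add (integrable_const _) (hint.const_mul _),
    integral_const_mul, hmean, integral_const, probReal_univ]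
  simp

theorem conservative_in_the_mean_general
    {Ω : Type*} [MeasurableSpace Ω] (μ : Measure Ω) [IsProbabilityMeasure μ]
    (e β : ℝ)
    (η : Ω → ℝ)
    (hint : Integrable η μ) (hint2 : Integrable (fun ω => (η ω) ^ 2) μ)
    (hmean : ∫ ω, η ω ∂μ = 0) (hvar : ∫ ω, (η ω) ^ 2 ∂μ = β ^ 2)
    (hcons : β ^ 2 = 1 - e ^ 2) :
    ∀ v w σ : EuclideanSpace ℝ (Fin 3), ‖σ‖ = 1 →
      ∫ ω, (‖(1 / 2 : ℝ) • (v + w) + ((1 - (e + η ω)) / 4) • (v - w)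
              + (((1 + (e + η ω)) / 4) * ‖v - w‖) • σ‖ ^ 2
            + ‖(1 / 2 : ℝ) • (v + w) - ((1 - (e + η ω)) / 4) • (v - w)
              - (((1 + (e + η ω)) / 4) * ‖v - w‖) • σ‖ ^ 2) ∂μ
        = ‖v‖ ^ 2 + ‖w‖ ^ 2 := by
  intro v w σ hσ
  set c := (‖v - w‖ ^ 2 - ‖v - w‖ * ⟪v - w, σ⟫) / 4
  obtain ⟨hsq_int, hsq⟩ := integrable_and_integral_const_add_sq hint hint2 hmean e
  have hsecond_moment : ∫ ω, (e + η ω) ^ 2 ∂μ = 1 := by rw [hsq, hvar, hcons]; ring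
  have hloss : Integrable (fun ω => c * (1 - (e + η ω) ^ 2)) μ :=
    ((integrable_const 1).sub hsq_int).const_mul c
  simp_rw [collision_energy v w σ hσ]
  rw [integral_sub (integrable_const _) hloss, integral_const_mul,
    integral_sub (integrable_const _) hsq_int, hsecond_moment]
  simp

/-- with variance β² = 1 - e², the random collision is
conservative in the mean. -/
theorem conservative_in_the_mean
    {Ω : Type*} [MeasurableSpace Ω] (μ : Measure Ω) [IsProbabilityMeasure μ]
    (e β : ℝ) (he0 : 0 ≤ e) (he1 : e ≤ 1)
    (η : Ω → ℝ) (hmeas : Measurable η)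
    (hint : Integrable η μ) (hint2 : Integrable (fun ω => (η ω) ^ 2) μ)
    (hmean : ∫ ω, η ω ∂μ = 0) (hvar : ∫ ω, (η ω) ^ 2 ∂μ = β ^ 2)
    (hcons : β ^ 2 = 1 - e ^ 2) :
    ∀ v w σ : EuclideanSpace ℝ (Fin 3), ‖σ‖ = 1 →
      ∫ ω, (‖(1 / 2 : ℝ) • (v + w) + ((1 - (e + η ω)) / 4) • (v - w)
              + (((1 + (e + η ω)) / 4) * ‖v - w‖) • σ‖ ^ 2
            + ‖(1 / 2 : ℝ) • (v + w) - ((1 - (e + η ω)) / 4) • (v - w)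
              - (((1 + (e + η ω)) / 4) * ‖v - w‖) • σ‖ ^ 2) ∂μ
        = ‖v‖ ^ 2 + ‖w‖ ^ 2 :=
  conservative_in_the_mean_general μ e β η hint hint2 hmean hvar hcons
end

section
/- Let f₁, f₂ be probability measures on ℝ₊ with finite second moments and equal means, let λ ∈ [0,1], p = λ, q = 1-λ, and η a random variable with E[η]=0, Var(η)=β², independent of everything else. For the gain operator Q⁺(f)(·) = E[law of (p+η)V + qW] where V, W are independent with law f, one has W₂²(Q⁺(f₁), Q⁺(f₂)) ≤ (E[(p+η)²] + q²) W₂²(f₁, f₂). -/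
/-!
Given a coupling `π` of `f₁` and `f₂`, draw `η ∼ ν` and two independent pairs
`(V₁, V₂), (W₁, W₂) ∼ π`. Then `((p + η) V₁ + q W₁, (p + η) V₂ + q W₂)` couples the two gain
laws, and its cost is
`E[((p + η)(V₁ - V₂) + q (W₁ - W₂))²] = (E[(p + η)²] + q²) E[(V₁ - V₂)²]`:
the cross term vanishes because equal means give `E[V₁ - V₂] = 0`.
Taking the infimum over `π` gives the bound.
-/

open MeasureTheory Pointwise

noncomputable def W2sq (f g : Measure ℝ) : ℝ :=
  sInf { c | ∃ π : Measure (ℝ × ℝ), π.map Prod.fst = f ∧ π.map Prod.snd = g ∧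
      c = ∫ p, (p.1 - p.2) ^ 2 ∂π }

noncomputable def gainOp (p q : ℝ) (ν : Measure ℝ) (f : Measure ℝ) : Measure ℝ :=
  Measure.map (fun x : ℝ × ℝ × ℝ => (p + x.1) * x.2.1 + q * x.2.2)
    (ν.prod (f.prod f))

theorem W2sq_le_mul_of_forall_coupling {f₁ f₂ g₁ g₂ : Measure ℝ}
    [IsProbabilityMeasure f₁] [IsProbabilityMeasure f₂] {K : ℝ} (hK : 0 ≤ K)
    (h : ∀ π : Measure (ℝ × ℝ), π.map Prod.fst = f₁ → π.map Prod.snd = f₂ →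
      ∃ ρ : Measure (ℝ × ℝ), ρ.map Prod.fst = g₁ ∧ ρ.map Prod.snd = g₂ ∧
        ∫ x, (x.1 - x.2) ^ 2 ∂ρ ≤ K * ∫ x, (x.1 - x.2) ^ 2 ∂π) :
    W2sq g₁ g₂ ≤ K * W2sq f₁ f₂ := by
  have hne : { c | ∃ π : Measure (ℝ × ℝ), π.map Prod.fst = f₁ ∧ π.map Prod.snd = f₂ ∧
      c = ∫ p, (p.1 - p.2) ^ 2 ∂π }.Nonempty :=
    ⟨_, f₁.prod f₂, by simp, by simp, rfl⟩
  rw [W2sq, W2sq, ← smul_eq_mul, ← Real.sInf_smul_of_nonneg hK]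
  refine le_csInf hne.smul_set ?_
  rintro _ ⟨_, ⟨π, hπ₁, hπ₂, rfl⟩, rfl⟩
  obtain ⟨ρ, hρ₁, hρ₂, hρ⟩ := h π hπ₁ hπ₂
  refine (csInf_le ⟨0, ?_⟩ ?_).trans hρ
  · rintro _ ⟨_, -, -, rfl⟩
    exact integral_nonneg fun _ => sq_nonneg _
  · exact ⟨ρ, hρ₁, hρ₂, rfl⟩

theorem integral_sq_mul_add_mul_prod {α β : Type*} [MeasurableSpace α] [MeasurableSpace β]
    {ν : Measure β} {π : Measure α} [IsProbabilityMeasure ν] [IsProbabilityMeasure π]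
    {a : β → ℝ} {u : α → ℝ} (q : ℝ) (ha : MemLp a 2 ν) (hu : MemLp u 2 π)
    (hu₀ : ∫ x, u x ∂π = 0) :
    ∫ z, (a z.1 * u z.2.1 + q * u z.2.2) ^ 2 ∂(ν.prod (π.prod π)) =
      (∫ s, a s ^ 2 ∂ν + q ^ 2) * ∫ x, u x ^ 2 ∂π := by
  have ha₁ : Integrable a ν := ha.integrable one_le_two
  have hu₁ : Integrable u π := hu.integrable one_le_two
  have hexpand : ∀ z : β × α × α, (a z.1 * u z.2.1 + q * u z.2.2) ^ 2 =
      a z.1 ^ 2 * u z.2.1 ^ 2 + q ^ 2 * u z.2.2 ^ 2 + 2 * q * a z.1 * (u z.2.1 * u z.2.2) :=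
    fun z => by ring
  have h₁ : Integrable (fun z : β × α × α => a z.1 ^ 2 * u z.2.1 ^ 2) (ν.prod (π.prod π)) :=
    ha.integrable_sq.mul_prod (hu.integrable_sq.comp_fst π)
  have h₂ : Integrable (fun z : β × α × α => q ^ 2 * u z.2.2 ^ 2) (ν.prod (π.prod π)) :=
    ((hu.integrable_sq.comp_snd π).comp_snd ν).const_mul _
  have h₃ : Integrable (fun z : β × α × α => 2 * q * a z.1 * (u z.2.1 * u z.2.2))
      (ν.prod (π.prod π)) :=
    (ha₁.const_mul (2 * q)).mul_prod (hu₁.mul_prod hu₁)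
  have h₁₂ : Integrable (fun z : β × α × α => a z.1 ^ 2 * u z.2.1 ^ 2 + q ^ 2 * u z.2.2 ^ 2)
      (ν.prod (π.prod π)) := h₁.add h₂
  simp_rw [hexpand]
  rw [integral_add h₁₂ h₃, integral_add h₁ h₂,
    integral_prod_mul (fun s => a s ^ 2) (fun w : α × α => u w.1 ^ 2),
    integral_prod_mul (fun s => 2 * q * a s) (fun w : α × α => u w.1 * u w.2),
    integral_prod_mul u u, hu₀, integral_fun_snd (fun w : α × α => q ^ 2 * u w.2 ^ 2),
    integral_fun_fst (fun x => u x ^ 2), integral_fun_snd (fun x => q ^ 2 * u x ^ 2),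
    integral_const_mul]
  simp only [probReal_univ, smul_eq_mul, one_mul, mul_zero, add_zero]
  ring

theorem map_prod_prodMap_eq_gainOp {α : Type*} [MeasurableSpace α] (p q : ℝ) (ν : Measure ℝ)
    [SFinite ν] {π : Measure α} [SFinite π] {g : α → ℝ} (hg : Measurable g) :
    (ν.prod (π.prod π)).map (fun z => (p + z.1) * g z.2.1 + q * g z.2.2) =
      gainOp p q ν (π.map g) := by
  rw [gainOp, Measure.map_prod_map π π hg hg,
    ← Measure.map_id (μ := ν), Measure.map_prod_map ν _ measurable_id (hg.prodMap hg),
    Measure.map_map (by fun_prop) (by fun_prop), Measure.map_id]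
  rfl

noncomputable def gainCoupling (p q : ℝ) (ν : Measure ℝ) (π : Measure (ℝ × ℝ)) :
    Measure (ℝ × ℝ) :=
  (ν.prod (π.prod π)).map fun z =>
    ((p + z.1) * z.2.1.1 + q * z.2.2.1, (p + z.1) * z.2.1.2 + q * z.2.2.2)

section Coupling

variable {p q : ℝ} {ν : Measure ℝ} {π : Measure (ℝ × ℝ)}

theorem gainCoupling_map_fst [SFinite ν] [SFinite π] :
    (gainCoupling p q ν π).map Prod.fst = gainOp p q ν (π.map Prod.fst) := by
  rw [gainCoupling, Measure.map_map measurable_fst (by fun_prop)]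
  exact map_prod_prodMap_eq_gainOp p q ν measurable_fst

theorem gainCoupling_map_snd [SFinite ν] [SFinite π] :
    (gainCoupling p q ν π).map Prod.snd = gainOp p q ν (π.map Prod.snd) := by
  rw [gainCoupling, Measure.map_map measurable_snd (by fun_prop)]
  exact map_prod_prodMap_eq_gainOp p q ν measurable_snd

theorem integral_sq_sub_gainCoupling [IsProbabilityMeasure ν] [IsProbabilityMeasure π]
    (hν : MemLp id 2 ν) (hπ : MemLp (fun x => x.1 - x.2) 2 π)
    (hπ₀ : ∫ x, (x.1 - x.2) ∂π = 0) :
    ∫ x, (x.1 - x.2) ^ 2 ∂(gainCoupling p q ν π) =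
      (∫ s, (p + s) ^ 2 ∂ν + q ^ 2) * ∫ x, (x.1 - x.2) ^ 2 ∂π := by
  have hshift : MemLp (fun s => p + s) 2 ν := (memLp_const p).add hν
  rw [gainCoupling, integral_map (by fun_prop) (by fun_prop),
    ← integral_sq_mul_add_mul_prod q hshift hπ hπ₀]
  congr 1 with z
  ring

theorem memLp_fst_sub_snd {r : ENNReal} (h₁ : MemLp id r (π.map Prod.fst))
    (h₂ : MemLp id r (π.map Prod.snd)) : MemLp (fun x => x.1 - x.2) r π :=
  (h₁.comp_of_map measurable_fst.aemeasurable).sub (h₂.comp_of_map measurable_snd.aemeasurable)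

theorem integral_fst_sub_snd (h₁ : Integrable id (π.map Prod.fst))
    (h₂ : Integrable id (π.map Prod.snd)) :
    ∫ x, (x.1 - x.2) ∂π = ∫ x, x ∂(π.map Prod.fst) - ∫ x, x ∂(π.map Prod.snd) := by
  have hfst : Integrable (fun x : ℝ × ℝ => x.1) π := h₁.comp_measurable measurable_fst
  have hsnd : Integrable (fun x : ℝ × ℝ => x.2) π := h₂.comp_measurable measurable_snd
  rw [integral_sub hfst hsnd,
    integral_map (f := fun x => x) measurable_fst.aemeasurable aestronglyMeasurable_id,
    integral_map (f := fun x => x) measurable_snd.aemeasurable aestronglyMeasurable_id]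

end Coupling

theorem gain_operator_W2_contraction_general
    (lam : ℝ)
    (ν : Measure ℝ) [IsProbabilityMeasure ν]
    (hνint : Integrable (fun s => s ^ 2) ν)
    (f₁ f₂ : Measure ℝ) [IsProbabilityMeasure f₁] [IsProbabilityMeasure f₂]
    (hm1 : Integrable (fun x => x ^ 2) f₁) (hm2 : Integrable (fun x => x ^ 2) f₂)
    (hmean : ∫ x, x ∂f₁ = ∫ x, x ∂f₂) :
    W2sq (gainOp lam (1 - lam) ν f₁) (gainOp lam (1 - lam) ν f₂)
      ≤ ((∫ s, (lam + s) ^ 2 ∂ν) + (1 - lam) ^ 2) * W2sq f₁ f₂ := by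
  have hL2 : ∀ μ : Measure ℝ, Integrable (fun x => x ^ 2) μ → MemLp id 2 μ :=
    fun μ h => (memLp_two_iff_integrable_sq aestronglyMeasurable_id).2 h
  refine W2sq_le_mul_of_forall_coupling (by positivity) fun π h₁ h₂ => ?_
  subst h₁ h₂
  have : IsProbabilityMeasure π := Measure.isProbabilityMeasure_of_map Prod.fst
  refine ⟨gainCoupling lam (1 - lam) ν π, gainCoupling_map_fst, gainCoupling_map_snd,
    (integral_sq_sub_gainCoupling (hL2 ν hνint)
      (memLp_fst_sub_snd (hL2 _ hm1) (hL2 _ hm2)) ?_).le⟩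
  rw [integral_fst_sub_snd ((hL2 _ hm1).integrable one_le_two)
    ((hL2 _ hm2).integrable one_le_two), hmean, sub_self]

/-- Wasserstein contraction estimate for the gain operator. -/
theorem gain_operator_W2_contraction
    (lam β : ℝ) (hlam0 : 0 ≤ lam) (hlam1 : lam ≤ 1)
    (ν : Measure ℝ) [IsProbabilityMeasure ν]
    (hνmean : ∫ s, s ∂ν = 0) (hνvar : ∫ s, s ^ 2 ∂ν = β ^ 2)
    (hνint : Integrable (fun s => s ^ 2) ν)
    (f₁ f₂ : Measure ℝ) [IsProbabilityMeasure f₁] [IsProbabilityMeasure f₂]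
    (hpos1 : ∀ᵐ x ∂f₁, 0 ≤ x) (hpos2 : ∀ᵐ x ∂f₂, 0 ≤ x)
    (hm1 : Integrable (fun x => x ^ 2) f₁) (hm2 : Integrable (fun x => x ^ 2) f₂)
    (hmean : ∫ x, x ∂f₁ = ∫ x, x ∂f₂) :
    W2sq (gainOp lam (1 - lam) ν f₁) (gainOp lam (1 - lam) ν f₂)
      ≤ ((∫ s, (lam + s) ^ 2 ∂ν) + (1 - lam) ^ 2) * W2sq f₁ f₂ :=
  gain_operator_W2_contraction_general lam ν hνint f₁ f₂ hm1 hm2 hmean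
end
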